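/- arXiv:1612.03871 — 2 statements merged into one kernel-verified Lean document; each statement's English description precedes it below -/
import Mathlib

section
/- Let F be a monotone nondecreasing submodular set function on subsets of a finite ground set L with F(∅) = 0, and let B ≤ |L| be a budget. The greedy algorithm that starts from the empty set and at each of B steps adds the element with the largest marginal gain produces a set Ĝ with F(Ĝ) ≥ (1 − 1/e) · max{F(S) : S ⊆ L, |S| = B}. In fact, after k greedy steps, F(Ĝ_k) ≥ (1 − (1 − 1/B)^k) · OPT, where OPT is the optimal value over sets of size B. -/
/-!
Submodularity bounds `F S` by `F A` plus the sum of the marginal gains at `A` of the elements of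
`S \ A`, and each of these at most `|S| = B` gains is dominated by the greedy gain. Hence every
greedy step closes at least a `1 / B` fraction of the gap `F S - F (G k)`, so that gap decays like
`(1 - 1 / B) ^ k`, and `(1 - 1 / B) ^ B ≤ 1 / e`.
-/

open Finset

section Submodular

variable {α : Type*} [DecidableEq α] {L : Finset α} {F : Finset α → ℝ}

theorem le_add_sum_marginal_of_disjoint
    (hsub : ∀ A B : Finset α, A ⊆ B → B ⊆ L → ∀ x ∈ L \ B,
      F (insert x A) - F A ≥ F (insert x B) - F B)
    {A T : Finset α} (hA : A ⊆ L) (hT : T ⊆ L) (hAT : Disjoint A T) :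
    F (A ∪ T) ≤ F A + ∑ x ∈ T, (F (insert x A) - F A) := by
  induction T using Finset.induction_on with
  | empty => simp
  | @insert y T hy ih =>
    rw [insert_subset_iff] at hT
    rw [disjoint_insert_right] at hAT
    have hyAT : y ∈ L \ (A ∪ T) := mem_sdiff.2 ⟨hT.1, by simp [hAT.1, hy]⟩
    have hdim := hsub A (A ∪ T) subset_union_left (union_subset hA hT.2) y hyAT
    rw [union_insert, sum_insert hy]
    linarith [ih hT.2 hAT.2]

theorem le_add_sum_marginal
    (hsub : ∀ A B : Finset α, A ⊆ B → B ⊆ L → ∀ x ∈ L \ B,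
      F (insert x A) - F A ≥ F (insert x B) - F B)
    {A T : Finset α} (hA : A ⊆ L) (hT : T ⊆ L) :
    F (A ∪ T) ≤ F A + ∑ x ∈ T \ A, (F (insert x A) - F A) := by
  simpa using le_add_sum_marginal_of_disjoint hsub hA (sdiff_subset.trans hT) disjoint_sdiff

theorem le_add_card_mul_greedy_gain
    (hmono : ∀ A B : Finset α, A ⊆ B → B ⊆ L → F A ≤ F B)
    (hsub : ∀ A B : Finset α, A ⊆ B → B ⊆ L → ∀ x ∈ L \ B,
      F (insert x A) - F A ≥ F (insert x B) - F B)
    {A S : Finset α} {l : α} (hA : A ⊆ L) (hS : S ⊆ L) (hl : l ∈ L \ A)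
    (hmax : ∀ l' ∈ L \ A, F (insert l A) - F A ≥ F (insert l' A) - F A) :
    F S ≤ F A + S.card * (F (insert l A) - F A) := by
  have hgain : 0 ≤ F (insert l A) - F A :=
    sub_nonneg.2 (hmono _ _ (subset_insert l A) (insert_subset (mem_sdiff.1 hl).1 hA))
  have hsum : ∑ x ∈ S \ A, (F (insert x A) - F A) ≤ (S \ A).card * (F (insert l A) - F A) := by
    simpa using sum_le_card_nsmul (S \ A) _ _ fun x hx => hmax x (sdiff_subset_sdiff hS le_rfl hx)
  have hcard : ((S \ A).card : ℝ) ≤ S.card := by exact_mod_cast card_le_card sdiff_subset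
  calc F S ≤ F (A ∪ S) := hmono _ _ subset_union_right (union_subset hA hS)
    _ ≤ F A + ∑ x ∈ S \ A, (F (insert x A) - F A) := le_add_sum_marginal hsub hA hS
    _ ≤ F A + S.card * (F (insert l A) - F A) := by
      linarith [mul_le_mul_of_nonneg_right hcard hgain]

theorem sub_insert_greedy_le_one_sub_inv_mul
    (hmono : ∀ A B : Finset α, A ⊆ B → B ⊆ L → F A ≤ F B)
    (hsub : ∀ A B : Finset α, A ⊆ B → B ⊆ L → ∀ x ∈ L \ B,
      F (insert x A) - F A ≥ F (insert x B) - F B)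
    {A S : Finset α} {l : α} (hA : A ⊆ L) (hS : S ⊆ L) (hS0 : 0 < S.card) (hl : l ∈ L \ A)
    (hmax : ∀ l' ∈ L \ A, F (insert l A) - F A ≥ F (insert l' A) - F A) :
    F S - F (insert l A) ≤ (1 - 1 / (S.card : ℝ)) * (F S - F A) := by
  have hgap : (F S - F A) / S.card ≤ F (insert l A) - F A := by
    rw [div_le_iff₀ (by exact_mod_cast hS0)]
    linarith [le_add_card_mul_greedy_gain hmono hsub hA hS hl hmax]
  rw [one_sub_mul, one_div_mul_eq_div]
  linarith

end Submodular

theorem greedy_guarantee_general {α : Type*} [DecidableEq α]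
    (L : Finset α) (F : Finset α → ℝ)
    (hmono : ∀ A B : Finset α, A ⊆ B → B ⊆ L → F A ≤ F B)
    (hsub : ∀ A B : Finset α, A ⊆ B → B ⊆ L → ∀ x ∈ L \ B,
      F (insert x A) - F A ≥ F (insert x B) - F B)
    (hempty : F ∅ = 0)
    (B : ℕ) (hBpos : 0 < B)
    (G : ℕ → Finset α) (hG0 : G 0 = ∅) (hGsub : ∀ k, G k ⊆ L)
    (hgreedy : ∀ k < B, ∃ l ∈ L \ G k,
      G (k + 1) = insert l (G k) ∧
      ∀ l' ∈ L \ G k, F (insert l (G k)) - F (G k) ≥ F (insert l' (G k)) - F (G k)) :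
    (∀ S : Finset α, S ⊆ L → S.card = B →
        (∀ k ≤ B, F (G k) ≥ (1 - (1 - 1 / (B : ℝ)) ^ k) * F S) ∧
        F (G B) ≥ (1 - 1 / Real.exp 1) * F S) := by
  intro S hS hScard
  subst hScard
  have hstep : ∀ k < S.card,
      F S - F (G (k + 1)) ≤ (1 - 1 / (S.card : ℝ)) * (F S - F (G k)) := by
    intro k hk
    obtain ⟨l, hl, hGk, hmax⟩ := hgreedy k hk
    rw [hGk]
    exact sub_insert_greedy_le_one_sub_inv_mul hmono hsub (hGsub k) hS hBpos hl hmax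
  have hgap : ∀ k ≤ S.card, F S - F (G k) ≤ (1 - 1 / (S.card : ℝ)) ^ k * F S := by
    intro k hk
    have hq : 0 ≤ 1 - 1 / (S.card : ℝ) :=
      sub_nonneg.2 (div_le_one_of_le₀ (by exact_mod_cast hBpos) (Nat.cast_nonneg _))
    simpa [hG0, hempty] using le_geom (u := fun k => F S - F (G k)) hq k
      fun j hj => hstep j (hj.trans_le hk)
  refine ⟨fun k hk => by linarith [hgap k hk], ?_⟩
  have hFS : 0 ≤ F S := hempty ▸ hmono ∅ S (empty_subset S) hS
  have hexp : (1 - 1 / (S.card : ℝ)) ^ S.card ≤ 1 / Real.exp 1 := by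
    simpa [Real.exp_neg] using
      Real.one_sub_div_pow_le_exp_neg (n := S.card) (t := 1) (by exact_mod_cast hBpos)
  linarith [hgap S.card le_rfl, mul_le_mul_of_nonneg_right hexp hFS]

theorem greedy_guarantee {α : Type*} [DecidableEq α]
    (L : Finset α) (F : Finset α → ℝ)
    (hmono : ∀ A B : Finset α, A ⊆ B → B ⊆ L → F A ≤ F B)
    (hsub : ∀ A B : Finset α, A ⊆ B → B ⊆ L → ∀ x ∈ L \ B,
      F (insert x A) - F A ≥ F (insert x B) - F B)
    (hempty : F ∅ = 0)
    (B : ℕ) (hBpos : 0 < B) (hBle : B ≤ L.card)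
    (G : ℕ → Finset α) (hG0 : G 0 = ∅) (hGsub : ∀ k, G k ⊆ L)
    (hgreedy : ∀ k < B, ∃ l ∈ L \ G k,
      G (k + 1) = insert l (G k) ∧
      ∀ l' ∈ L \ G k, F (insert l (G k)) - F (G k) ≥ F (insert l' (G k)) - F (G k)) :
    (∀ S : Finset α, S ⊆ L → S.card = B →
        (∀ k ≤ B, F (G k) ≥ (1 - (1 - 1 / (B : ℝ)) ^ k) * F S) ∧
        F (G B) ≥ (1 - 1 / Real.exp 1) * F S) :=
  greedy_guarantee_general L F hmono hsub hempty B hBpos G hG0 hGsub hgreedy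
end

section
/- Let OPT > 0, B a positive integer, and let (g_k) be a nonnegative sequence with g_0 = 0 satisfying g_{k+1} − g_k ≥ (OPT − g_k)/B for all k ≥ 0. Then g_k ≥ (1 − (1 − 1/B)^k)·OPT for all k ≥ 0; in particular g_B ≥ (1 − 1/e)·OPT. -/
/-! The gap `OPT - g k` to the optimum shrinks by a factor `1 - 1/B` at every step, so after
`k` steps it is at most `(1 - 1/B)^k * OPT`; and `(1 - 1/B)^B ≤ e⁻¹`. -/

theorem sub_succ_le_one_sub_one_div_mul_sub {OPT B : ℝ} {g : ℕ → ℝ} {k : ℕ}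
    (hstep : g (k + 1) - g k ≥ (OPT - g k) / B) :
    OPT - g (k + 1) ≤ (1 - 1 / B) * (OPT - g k) := by
  have hsplit : (1 - 1 / B) * (OPT - g k) = (OPT - g k) - (OPT - g k) / B := by ring
  linarith

theorem sub_le_one_sub_one_div_pow_mul {OPT B : ℝ} (hB : 1 ≤ B) {g : ℕ → ℝ}
    (hrec : ∀ k, g (k + 1) - g k ≥ (OPT - g k) / B) (k : ℕ) :
    OPT - g k ≤ (1 - 1 / B) ^ k * (OPT - g 0) := by
  have hc : 0 ≤ 1 - 1 / B := sub_nonneg.2 ((div_le_one (by linarith)).2 hB)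
  exact le_geom (u := fun k => OPT - g k) hc k
    fun k _ => sub_succ_le_one_sub_one_div_mul_sub (hrec k)

theorem greedy_recurrence_general (OPT : ℝ) (hOPT : 0 < OPT)
    (B : ℕ) (hB : 0 < B)
    (g : ℕ → ℝ) (hg0 : g 0 = 0)
    (hrec : ∀ k, g (k + 1) - g k ≥ (OPT - g k) / B) :
    (∀ k, g k ≥ (1 - (1 - 1 / (B : ℝ)) ^ k) * OPT) ∧
    g B ≥ (1 - 1 / Real.exp 1) * OPT := by
  have hB' : (1 : ℝ) ≤ B := by exact_mod_cast hB
  have hbound : ∀ k, g k ≥ (1 - (1 - 1 / (B : ℝ)) ^ k) * OPT := fun k => by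
    have := sub_le_one_sub_one_div_pow_mul hB' hrec k
    rw [hg0, sub_zero] at this
    linarith
  have hpow : (1 - 1 / (B : ℝ)) ^ B ≤ 1 / Real.exp 1 := by
    rw [one_div (Real.exp 1), ← Real.exp_neg]
    exact Real.one_sub_div_pow_le_exp_neg hB'
  refine ⟨hbound, ?_⟩
  calc g B ≥ (1 - (1 - 1 / (B : ℝ)) ^ B) * OPT := hbound B
    _ ≥ (1 - 1 / Real.exp 1) * OPT := by gcongr

theorem greedy_recurrence (OPT : ℝ) (hOPT : 0 < OPT)
    (B : ℕ) (hB : 0 < B)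
    (g : ℕ → ℝ) (hg0 : g 0 = 0) (hgnn : ∀ k, 0 ≤ g k)
    (hrec : ∀ k, g (k + 1) - g k ≥ (OPT - g k) / B) :
    (∀ k, g k ≥ (1 - (1 - 1 / (B : ℝ)) ^ k) * OPT) ∧
    g B ≥ (1 - 1 / Real.exp 1) * OPT :=
  greedy_recurrence_general OPT hOPT B hB g hg0 hrec
end
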